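/- Let A be an n×n real symmetric arrow matrix as above (diagonal block diag(γ_1,...,γ_{n-1}), last column entries a_i and corner b), T_r its Newton transformations, and ν = e_n. Then ⟨T_{r-1} ν, e_i⟩ = -a_i · s_{r-2}(γ_1,...,γ̂_i,...,γ_{n-1}) for every 2 ≤ r ≤ n and 1 ≤ i ≤ n-1, where s_j(γ̂_i) is the j-th elementary symmetric polynomial of the γ's with γ_i omitted. -/

import Mathlib

open Finset Matrix

/-- The `r`-th elementary symmetric polynomial of the values of `x` on the index set `s`
(`s_0 = 1` by convention). -/
noncomputable def esymm {n : ℕ} (s : Finset (Fin n)) (r : ℕ) (x : Fin n → ℝ) : ℝ :=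
  ∑ t ∈ s.powersetCard r, ∏ i ∈ t, x i

/-- `S_r(A)`, the `r`-th elementary symmetric function of the eigenvalues of an `n × n`
matrix `A`, read off from the characteristic polynomial
`det(tI - A) = ∑_r (-1)^r S_r t^{n-r}`. -/
noncomputable def Smat {n : ℕ} (A : Matrix (Fin n) (Fin n) ℝ) (r : ℕ) : ℝ :=
  (-1) ^ r * A.charpoly.coeff (n - r)

/-- The Newton transformations of a matrix `A`: `T_0 = I`, `T_r = S_r(A) I - A T_{r-1}`. -/
noncomputable def newtonM {n : ℕ} (A : Matrix (Fin n) (Fin n) ℝ) :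
    ℕ → Matrix (Fin n) (Fin n) ℝ
  | 0 => 1
  | r + 1 => Smat A (r + 1) • 1 - A * newtonM A r

open Polynomial

open Finset Matrix Polynomial

section Arrow
variable {R : Type*} [CommRing R]

def arrowM (k : ℕ) (d c c' : Fin k → R) (e : R) : Matrix (Fin (k+1)) (Fin (k+1)) R :=
  Matrix.of (Fin.lastCases (Fin.snoc c' e)
    (fun i => Fin.snoc (fun j => if i = j then d i else 0) (c i)))

@[simp] lemma arrowM_cc (k : ℕ) (d c c' : Fin k → R) (e : R) (i j : Fin k) :
    arrowM k d c c' e i.castSucc j.castSucc = if i = j then d i else 0 := by simp [arrowM]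

@[simp] lemma arrowM_cl (k : ℕ) (d c c' : Fin k → R) (e : R) (i : Fin k) :
    arrowM k d c c' e i.castSucc (Fin.last k) = c i := by simp [arrowM]

@[simp] lemma arrowM_lc (k : ℕ) (d c c' : Fin k → R) (e : R) (j : Fin k) :
    arrowM k d c c' e (Fin.last k) j.castSucc = c' j := by simp [arrowM]

@[simp] lemma arrowM_ll (k : ℕ) (d c c' : Fin k → R) (e : R) :
    arrowM k d c c' e (Fin.last k) (Fin.last k) = e := by simp [arrowM]

lemma arrowM_succ0 (k : ℕ) (d c c' : Fin (k+1) → R) (e : R) (i : Fin k) :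
    arrowM (k+1) d c c' e i.succ.castSucc 0 = 0 := by
  have h := arrowM_cc (k+1) d c c' e i.succ 0
  rw [if_neg (Fin.succ_ne_zero i)] at h
  exact h

lemma arrowM_l0 (k : ℕ) (d c c' : Fin (k+1) → R) (e : R) :
    arrowM (k+1) d c c' e (Fin.last (k+1)) 0 = c' 0 :=
  arrowM_lc (k+1) d c c' e 0

lemma arrowM_00 (k : ℕ) (d c c' : Fin (k+1) → R) (e : R) :
    arrowM (k+1) d c c' e 0 0 = d 0 := by
  have h := arrowM_cc (k+1) d c c' e 0 0
  rw [if_pos rfl] at h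
  exact h

lemma arrowM_0succ (k : ℕ) (d c c' : Fin (k+1) → R) (e : R) (j : Fin k) :
    arrowM (k+1) d c c' e 0 j.succ.castSucc = 0 := by
  have h := arrowM_cc (k+1) d c c' e 0 j.succ
  rw [if_neg (Ne.symm (Fin.succ_ne_zero j))] at h
  exact h

lemma arrowM_0l (k : ℕ) (d c c' : Fin (k+1) → R) (e : R) :
    arrowM (k+1) d c c' e 0 (Fin.last (k+1)) = c 0 :=
  arrowM_cl (k+1) d c c' e 0

lemma prod_erase_eq (k : ℕ) (f : Fin (k+1) → R) (p : Fin (k+1)) :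
    ∏ l ∈ univ.erase p, f l = ∏ i : Fin k, f (p.succAbove i) := by
  conv_lhs => rw [Fin.univ_succAbove k p]
  rw [Finset.erase_cons, Finset.prod_map]
  rfl

lemma erase_succ (k : ℕ) (i : Fin k) :
    (univ : Finset (Fin (k+1))).erase i.succ
      = insert 0 (((univ : Finset (Fin k)).erase i).map ⟨Fin.succ, Fin.succ_injective k⟩) := by
  ext x
  induction x using Fin.cases with
  | zero => simp [(Fin.succ_ne_zero i).symm]
  | succ y =>
    simp only [Finset.mem_erase, Finset.mem_insert, Finset.mem_map, Finset.mem_univ,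
      Function.Embedding.coeFn_mk, and_true, true_and]
    constructor
    · intro h
      exact Or.inr ⟨y, fun hy => h (by rw [hy]), rfl⟩
    · rintro (h | ⟨z, hz, hzy⟩)
      · exact absurd h (Fin.succ_ne_zero y)
      · intro hc
        apply hz
        have hzy' : z = y := Fin.succ_injective k hzy
        rw [hzy']
        exact Fin.succ_injective k hc

lemma prod_erase_succ (k : ℕ) (d : Fin (k+1) → R) (i : Fin k) :
    ∏ l ∈ (univ : Finset (Fin (k+1))).erase i.succ, d l
      = d 0 * ∏ l ∈ (univ : Finset (Fin k)).erase i, d l.succ := by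
  rw [erase_succ, Finset.prod_insert (by simp [(Fin.succ_ne_zero _).symm]), Finset.prod_map]
  rfl

lemma prod_erase_zero (k : ℕ) (d : Fin (k+1) → R) :
    ∏ l ∈ (univ : Finset (Fin (k+1))).erase 0, d l = ∏ i : Fin k, d i.succ := by
  rw [prod_erase_eq]
  simp

lemma det_arrowM (k : ℕ) (d c c' : Fin k → R) (e : R) :
    (arrowM k d c c' e).det
      = e * ∏ i, d i - ∑ i, c i * c' i * ∏ l ∈ univ.erase i, d l := by
  induction k generalizing e with
  | zero =>
    rw [Matrix.det_fin_one, show (0 : Fin 1) = Fin.last 0 from rfl, arrowM_ll]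
    simp
  | succ k ih =>
    have hsub1 : (arrowM (k+1) d c c' e).submatrix Fin.succ ((0 : Fin (k+2)).succAbove)
        = arrowM k (d ∘ Fin.succ) (c ∘ Fin.succ) (c' ∘ Fin.succ) e := by
      rw [Fin.succAbove_zero]
      ext i j
      refine Fin.lastCases ?_ (fun i' => ?_) i <;> refine Fin.lastCases ?_ (fun j' => ?_) j <;>
        simp [Matrix.submatrix_apply, Fin.succ_last, Fin.succ_castSucc, Fin.succ_inj, -Fin.castSucc_succ]
    have hP : ((arrowM (k+1) d c c' e).submatrix Fin.succ Fin.castSucc).submatrix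
          Fin.castSucc Fin.succ = Matrix.diagonal (fun m : Fin k => d m.succ) := by
      ext m j
      rw [Matrix.submatrix_apply, Matrix.submatrix_apply, Fin.succ_castSucc, arrowM_cc,
        Matrix.diagonal_apply]
      simp [Fin.succ_inj]
    have e1 : ∀ m : Fin k,
        ((arrowM (k+1) d c c' e).submatrix Fin.succ Fin.castSucc) m.castSucc 0 = 0 := by
      intro m
      rw [Matrix.submatrix_apply, Fin.succ_castSucc]
      exact arrowM_succ0 k d c c' e m
    have e2 : ((arrowM (k+1) d c c' e).submatrix Fin.succ Fin.castSucc) (Fin.last k) 0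
        = c' 0 := by
      rw [Matrix.submatrix_apply, Fin.succ_last]
      exact arrowM_l0 k d c c' e
    have hN : ((arrowM (k+1) d c c' e).submatrix Fin.succ ((Fin.last (k+1)).succAbove)).det
        = (-1)^k * (c' 0 * ∏ i : Fin k, d i.succ) := by
      rw [Fin.succAbove_last, Matrix.det_succ_column_zero, Fin.sum_univ_castSucc,
        Finset.sum_eq_zero (fun m _ => by rw [e1]; ring), zero_add, e2, Fin.succAbove_last,
        hP, Matrix.det_diagonal, Fin.val_last]
      ring
    rw [Matrix.det_succ_row_zero, Fin.sum_univ_castSucc, Fin.sum_univ_succ]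
    simp only [Fin.castSucc_zero]
    rw [Finset.sum_eq_zero (fun j _ => by rw [arrowM_0succ]; ring), add_zero,
      hsub1, arrowM_00, ih, hN, arrowM_0l, Fin.val_last, Fin.val_zero, pow_zero,
      Fin.prod_univ_succ d, Fin.sum_univ_succ
        (f := fun i => c i * c' i * ∏ l ∈ univ.erase i, d l),
      prod_erase_zero]
    have hsum : ∑ i : Fin k, c i.succ * c' i.succ * ∏ l ∈ univ.erase i.succ, d l
        = d 0 * ∑ i : Fin k, (c ∘ Fin.succ) i * (c' ∘ Fin.succ) i
            * ∏ l ∈ univ.erase i, (d ∘ Fin.succ) l := by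
      rw [Finset.mul_sum]
      refine Finset.sum_congr rfl fun i _ => ?_
      rw [prod_erase_succ]
      simp only [Function.comp_apply]
      ring
    rw [hsum]
    have hk : ((-1 : R)^(k+1) * (-1)^k) = -1 := by
      rw [← pow_add]
      exact Odd.neg_one_pow ⟨k, by ring⟩
    have : ∏ i : Fin k, d i.succ = ∏ i : Fin k, (d ∘ Fin.succ) i := rfl
    rw [this]
    calc 1 * d 0 * (e * ∏ i : Fin k, (d ∘ Fin.succ) i
            - ∑ i : Fin k, (c ∘ Fin.succ) i * (c' ∘ Fin.succ) i
              * ∏ l ∈ univ.erase i, (d ∘ Fin.succ) l)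
          + (-1)^(k+1) * c 0 * ((-1)^k * (c' 0 * ∏ i : Fin k, (d ∘ Fin.succ) i))
        = e * (d 0 * ∏ i : Fin k, (d ∘ Fin.succ) i)
          - (c 0 * c' 0 * ∏ i : Fin k, (d ∘ Fin.succ) i
            + d 0 * ∑ i : Fin k, (c ∘ Fin.succ) i * (c' ∘ Fin.succ) i
              * ∏ l ∈ univ.erase i, (d ∘ Fin.succ) l) := by
          rw [show (-1 : R)^(k+1) * c 0 * ((-1)^k * (c' 0 * ∏ i : Fin k, (d ∘ Fin.succ) i))
              = ((-1 : R)^(k+1) * (-1)^k) * (c 0 * c' 0 * ∏ i : Fin k, (d ∘ Fin.succ) i)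
            from by ring, hk]
          ring
end Arrow

lemma charpoly_arrow (k : ℕ) (γ a : Fin k → ℝ) (b : ℝ)
    (A : Matrix (Fin (k + 1)) (Fin (k + 1)) ℝ)
    (hdiag : ∀ i j : Fin k, A i.castSucc j.castSucc = if i = j then γ i else 0)
    (hcol : ∀ i : Fin k, A i.castSucc (Fin.last k) = a i)
    (hrow : ∀ i : Fin k, A (Fin.last k) i.castSucc = a i)
    (hcorner : A (Fin.last k) (Fin.last k) = b) :
    A.charpoly = (X - C b) * ∏ i, (X - C (γ i))
      - ∑ i, C (a i) ^ 2 * ∏ l ∈ univ.erase i, (X - C (γ l)) := by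
  have hA : charmatrix A = arrowM k (fun i => X - C (γ i)) (fun i => -C (a i))
      (fun i => -C (a i)) (X - C b) := by
    ext i j
    refine Fin.lastCases ?_ (fun i' => ?_) i <;> refine Fin.lastCases ?_ (fun j' => ?_) j
    · rw [charmatrix_apply_eq, hcorner, arrowM_ll]
    · rw [charmatrix_apply_ne _ _ _ (ne_of_gt (Fin.castSucc_lt_last j')), hrow, arrowM_lc]
    · rw [charmatrix_apply_ne _ _ _ (ne_of_lt (Fin.castSucc_lt_last i')), hcol, arrowM_cl]
    · rcases eq_or_ne i' j' with rfl | hne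
      · rw [charmatrix_apply_eq, hdiag, if_pos rfl, arrowM_cc, if_pos rfl]
      · rw [charmatrix_apply_ne _ _ _ (by simpa [Fin.castSucc_inj] using hne), hdiag,
          if_neg hne, arrowM_cc, if_neg hne]
        simp
  rw [Matrix.charpoly, hA, det_arrowM]
  refine congrArg (HSub.hSub _) ?_
  exact Finset.sum_congr rfl fun i _ => by ring

lemma esymm_zero {n : ℕ} (s : Finset (Fin n)) (x : Fin n → ℝ) : esymm s 0 x = 1 := by
  simp [esymm]

lemma esymm_one {n : ℕ} (s : Finset (Fin n)) (x : Fin n → ℝ) :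
    esymm s 1 x = ∑ i ∈ s, x i := by
  simp [esymm, Finset.powersetCard_one]

lemma esymm_of_gt {n : ℕ} (s : Finset (Fin n)) (r : ℕ) (x : Fin n → ℝ) (h : s.card < r) :
    esymm s r x = 0 := by
  rw [esymm, Finset.powersetCard_eq_empty.2 h, Finset.sum_empty]

lemma esymm_erase {n : ℕ} (s : Finset (Fin n)) (i : Fin n) (h : i ∈ s) (t : ℕ)
    (x : Fin n → ℝ) :
    esymm s (t+1) x = esymm (s.erase i) (t+1) x + x i * esymm (s.erase i) t x := by
  unfold esymm
  conv_lhs => rw [← Finset.insert_erase h]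
  rw [Finset.powersetCard_succ_insert (Finset.notMem_erase i s),
    Finset.sum_union]
  · congr 1
    rw [Finset.sum_image, Finset.mul_sum]
    · refine Finset.sum_congr rfl fun u hu => ?_
      have hiu : i ∉ u := fun h' =>
        Finset.notMem_erase i s ((Finset.mem_powersetCard.1 hu).1 h')
      rw [Finset.prod_insert hiu]
    · intro u hu v hv huv
      have hiu : i ∉ u := fun h' =>
        Finset.notMem_erase i s ((Finset.mem_powersetCard.1 hu).1 h')
      have hiv : i ∉ v := fun h' =>
        Finset.notMem_erase i s ((Finset.mem_powersetCard.1 hv).1 h')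
      rw [← Finset.erase_insert hiu, ← Finset.erase_insert hiv, huv]
  · rw [Finset.disjoint_left]
    intro u hu hu'
    obtain ⟨v, hv, rfl⟩ := Finset.mem_image.1 hu'
    exact Finset.notMem_erase i s ((Finset.mem_powersetCard.1 hu).1 (Finset.mem_insert_self i v))

lemma coeff_prod_sub {n : ℕ} (s : Finset (Fin n)) (x : Fin n → ℝ) (m : ℕ) (h : m ≤ s.card) :
    (∏ i ∈ s, (X - C (x i))).coeff m = (-1)^(s.card - m) * esymm s (s.card - m) x := by
  have h1 := Multiset.prod_X_sub_C_coeff (s.val.map x) (k := m) (by simpa using h)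
  have hc : Multiset.card (s.val.map x) = s.card := by simp
  rw [Finset.prod_eq_multiset_prod,
    show (Multiset.map (fun i => X - C (x i)) s.val) = Multiset.map (fun t => X - C t)
      (s.val.map x) from by rw [Multiset.map_map]; rfl,
    h1, hc, esymm, ← Finset.esymm_map_val]

section Main
variable (k : ℕ) (γ a : Fin k → ℝ) (b : ℝ)
    (A : Matrix (Fin (k + 1)) (Fin (k + 1)) ℝ)
    (hdiag : ∀ i j : Fin k, A i.castSucc j.castSucc = if i = j then γ i else 0)
    (hcol : ∀ i : Fin k, A i.castSucc (Fin.last k) = a i)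
    (hrow : ∀ i : Fin k, A (Fin.last k) i.castSucc = a i)
    (hcorner : A (Fin.last k) (Fin.last k) = b)

include hdiag hcol hrow hcorner

lemma Smat_one : Smat A 1 = esymm univ 1 γ + b := by
  have ht : A.trace = esymm univ 1 γ + b := by
    rw [Matrix.trace, Fin.sum_univ_castSucc, esymm_one]
    simp [Matrix.diag, hdiag, hcorner]
  have h2 := Matrix.trace_eq_neg_charpoly_coeff A
  rw [show Fintype.card (Fin (k+1)) - 1 = k by simp] at h2
  rw [Smat, pow_one, show k + 1 - 1 = k from rfl, ← neg_one_mul] at *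
  rw [ht] at h2
  linarith [h2]

lemma Smat_formula (j : ℕ) (hk : j + 1 ≤ k) :
    Smat A (j + 2) = esymm univ (j+2) γ + b * esymm univ (j+1) γ
      - ∑ i, (a i)^2 * esymm (univ.erase i) j γ := by
  obtain ⟨p, rfl⟩ : ∃ p, k = j + 1 + p := ⟨k - (j+1), by omega⟩
  have hcard : (univ : Finset (Fin (j+1+p))).card = j+1+p := by simp
  have hQ : (∏ i, (X - C (γ i))).coeff p = (-1)^(j+1) * esymm univ (j+1) γ := by
    rw [coeff_prod_sub univ γ p (by omega)]
    congr 2 <;> omega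
  have hQi : ∀ i : Fin (j+1+p), (∏ l ∈ univ.erase i, (X - C (γ l))).coeff p
      = (-1)^j * esymm (univ.erase i) j γ := by
    intro i
    have hce : (univ.erase i).card = j + p := by
      rw [Finset.card_erase_of_mem (Finset.mem_univ i), hcard]; omega
    rw [coeff_prod_sub (univ.erase i) γ p (by omega), hce]
    congr 2 <;> omega
  have hXQ : (X * ∏ i, (X - C (γ i))).coeff p
      = (-1)^(j+2) * esymm univ (j+2) γ := by
    cases p with
    | zero =>
      rw [Polynomial.mul_coeff_zero, Polynomial.coeff_X_zero, zero_mul,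
        esymm_of_gt univ (j+2) γ (by omega), mul_zero]
    | succ q =>
      rw [Polynomial.coeff_X_mul, coeff_prod_sub univ γ q (by omega)]
      congr 2 <;> omega
  have hchar := charpoly_arrow (j+1+p) γ a b A hdiag hcol hrow hcorner
  rw [Smat, show j + 1 + p + 1 - (j + 2) = p by omega, hchar]
  rw [sub_mul, Polynomial.coeff_sub, Polynomial.coeff_sub, Polynomial.finset_sum_coeff]
  have hsum : ∑ i, (C (a i) ^ 2 * ∏ l ∈ univ.erase i, (X - C (γ l))).coeff p
      = (-1)^j * ∑ i, (a i)^2 * esymm (univ.erase i) j γ := by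
    rw [Finset.mul_sum]
    refine Finset.sum_congr rfl fun i _ => ?_
    rw [← Polynomial.C_pow, Polynomial.coeff_C_mul, hQi i]
    ring
  rw [hsum, hXQ, show (C b * ∏ i, (X - C (γ i))).coeff p
      = b * ((-1)^(j+1) * esymm univ (j+1) γ) from by rw [Polynomial.coeff_C_mul, hQ]]
  set E2 := esymm univ (j+2) γ
  set E1 := esymm univ (j+1) γ
  set S := ∑ i, (a i)^2 * esymm (univ.erase i) j γ
  have hu : ((-1:ℝ)^j) * ((-1:ℝ)^j) = 1 := by
    rw [← pow_add]
    exact Even.neg_one_pow ⟨j, rfl⟩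
  have h2 : (-1:ℝ)^(j+2) = (-1)^j := by rw [pow_succ, pow_succ]; ring
  have h1 : (-1:ℝ)^(j+1) = -(-1)^j := by rw [pow_succ]; ring
  rw [h2, h1]
  linear_combination (E2 + b * E1 - S) * hu

lemma newton_entries : ∀ m : ℕ, m ≤ k →
    (newtonM A m) (Fin.last k) (Fin.last k) = esymm univ m γ ∧
    ∀ i : Fin k, (newtonM A m) i.castSucc (Fin.last k)
      = if m = 0 then 0 else -(a i) * esymm (univ.erase i) (m-1) γ := by
  intro m
  induction m with
  | zero =>
    intro _
    constructor
    · rw [newtonM, Matrix.one_apply_eq, esymm_zero]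
    · intro i
      rw [newtonM, Matrix.one_apply_ne (ne_of_lt (Fin.castSucc_lt_last i)), if_pos rfl]
  | succ q ih =>
    intro hq
    obtain ⟨hw, hu⟩ := ih (by omega)
    have hrow' : ∀ j : Fin (k+1), (A * newtonM A q) j (Fin.last k)
        = ∑ l : Fin (k+1), A j l * (newtonM A q) l (Fin.last k) := fun j => rfl
    have hstep : ∀ j : Fin (k+1), (newtonM A (q+1)) j (Fin.last k)
        = Smat A (q+1) * (1 : Matrix (Fin (k+1)) (Fin (k+1)) ℝ) j (Fin.last k)
          - ∑ l : Fin (k+1), A j l * (newtonM A q) l (Fin.last k) := by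
      intro j
      rw [newtonM]
      simp [Matrix.sub_apply, Matrix.smul_apply, Matrix.mul_apply]
    have hsplit : ∀ j : Fin (k+1),
        ∑ l : Fin (k+1), A j l * (newtonM A q) l (Fin.last k)
        = (∑ l : Fin k, A j l.castSucc * (newtonM A q) l.castSucc (Fin.last k))
          + A j (Fin.last k) * (newtonM A q) (Fin.last k) (Fin.last k) :=
      fun j => Fin.sum_univ_castSucc _
    constructor
    · -- w entry
      rw [hstep, hsplit, Matrix.one_apply_eq, hw, hcorner]
      have hs : ∑ l : Fin k, A (Fin.last k) l.castSucc
          * (newtonM A q) l.castSucc (Fin.last k)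
          = ∑ l : Fin k, a l * (if q = 0 then 0 else -(a l) * esymm (univ.erase l) (q-1) γ) := by
        refine Finset.sum_congr rfl fun l _ => by rw [hrow, hu]
      rw [hs]
      cases q with
      | zero =>
        rw [Smat_one k γ a b A hdiag hcol hrow hcorner]
        simp [esymm_zero, esymm_one]
      | succ q' =>
        simp only [if_neg (Nat.succ_ne_zero q'), Nat.succ_sub_one]
        rw [Smat_formula k γ a b A hdiag hcol hrow hcorner q' (by omega)]
        have : ∑ l : Fin k, a l * (-(a l) * esymm (univ.erase l) q' γ)
            = -∑ l : Fin k, (a l)^2 * esymm (univ.erase l) q' γ := by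
          rw [← Finset.sum_neg_distrib]
          exact Finset.sum_congr rfl fun l _ => by ring
        rw [this]
        ring
    · -- u entries
      intro i
      rw [hstep, hsplit, Matrix.one_apply_ne (ne_of_lt (Fin.castSucc_lt_last i)), hw, hcol,
        if_neg (Nat.succ_ne_zero q), Nat.succ_sub_one]
      have hs : ∑ l : Fin k, A i.castSucc l.castSucc
          * (newtonM A q) l.castSucc (Fin.last k)
          = γ i * (newtonM A q) i.castSucc (Fin.last k) := by
        rw [Finset.sum_congr rfl (fun l _ => by rw [hdiag])]
        simp
      rw [hs, hu]
      cases q with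
      | zero =>
        simp [esymm_zero]
      | succ q' =>
        simp only [if_neg (Nat.succ_ne_zero q'), Nat.succ_sub_one]
        rw [esymm_erase univ i (Finset.mem_univ i) q' γ]
        ring
end Main

/-- For the `n × n` (`n = k+1`) real symmetric arrow matrix `A` (diagonal block
`diag(γ_1,...,γ_{n-1})`, last column entries `a_i`, corner `b`) with `ν = e_n`,
`⟨T_{r-1} ν, e_i⟩ = -a_i · s_{r-2}(γ_1,...,γ̂_i,...,γ_{n-1})` for every `2 ≤ r ≤ n` and
`1 ≤ i ≤ n-1`. -/
theorem stmt_10 (k : ℕ) (γ a : Fin k → ℝ) (b : ℝ)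
    (A : Matrix (Fin (k + 1)) (Fin (k + 1)) ℝ)
    (hdiag : ∀ i j : Fin k, A i.castSucc j.castSucc = if i = j then γ i else 0)
    (hcol : ∀ i : Fin k, A i.castSucc (Fin.last k) = a i)
    (hrow : ∀ i : Fin k, A (Fin.last k) i.castSucc = a i)
    (hcorner : A (Fin.last k) (Fin.last k) = b) :
    ∀ r, 2 ≤ r → r ≤ k + 1 → ∀ i : Fin k,
      dotProduct (newtonM A (r - 1) *ᵥ Pi.single (Fin.last k) (1 : ℝ))
          (Pi.single i.castSucc (1 : ℝ)) =
        -(a i) * esymm (univ.erase i) (r - 2) γ := by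
  intro r hr2 hrk i
  obtain ⟨hw, hu⟩ := newton_entries k γ a b A hdiag hcol hrow hcorner (r-1) (by omega)
  rw [dotProduct_single_one, Matrix.mulVec_single_one, Matrix.col_apply,
    hu i, if_neg (by omega), show r - 1 - 1 = r - 2 by omega]
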